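/- Let p : E → (0,1] be a probability distribution on exposures and w : E → ℝ a weight function. Assume Y is additive with parameters α = Y(0) and θ_{k,j} = Y(j·e_k unit vector) - Y(0). Then the linear estimator w(E_obs)·Y(E_obs) satisfies E[w(E_obs)Y(E_obs)] = θ_{1,m₁} for ALL additive potential outcome functions Y if and only if: (i) Σ_e p(e)w(e) = 0; (ii) Σ_e p(e)w(e)·1{e₁ = m₁} = 1; (iii) Σ_e p(e)w(e)·1{e₁ = m} = 0 for all m ∈ {1,...,m₁-1}; (iv) Σ_e p(e)w(e)·1{e_k = j} = 0 for all k ∈ {2,...,K} and j ∈ {1,...,m_k}. -/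

import Mathlib

/-!
The expectation `∑ e, p e * w e * Y e` of an additive outcome is affine in the parameters
`(α, θ)`, with coefficients `∑ e, p e * w e` and `∑ e, p e * w e * 1{e k = j}`. It equals
`θ 0 (m 0)` for all parameters exactly when these coefficients are `0` and the indicator of
`(0, m 0)`; testing `α = 1, θ = 0` and `α = 0`, `θ` an indicator, reads them off.
-/

open Finset

theorem sum_mul_affine_eq {Ω ι κ : Type*} [Fintype Ω] [Fintype ι] (s : ι → Finset κ)
    (c : Ω → ℝ) (f : ι → κ → Ω → ℝ) (α : ℝ) (θ : ι → κ → ℝ) :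
    ∑ e, c e * (α + ∑ k, ∑ j ∈ s k, θ k j * f k j e)
      = α * ∑ e, c e + ∑ k, ∑ j ∈ s k, θ k j * ∑ e, c e * f k j e := by
  simp only [mul_add, mul_sum, sum_add_distrib]
  rw [sum_comm]
  congr 1
  · exact sum_congr rfl fun _ _ => mul_comm _ _
  · refine sum_congr rfl fun k _ => ?_
    rw [sum_comm]
    exact sum_congr rfl fun j _ => sum_congr rfl fun e _ => by ring

theorem sum_sum_ite_and_eq {ι κ : Type*} [Fintype ι] [DecidableEq ι] [DecidableEq κ]
    (s : ι → Finset κ) (g : ι → κ → ℝ) (a : ι) (b : κ) :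
    ∑ k, ∑ j ∈ s k, (if k = a ∧ j = b then g k j else 0) = if b ∈ s a then g a b else 0 := by
  simp [ite_and, sum_ite_irrel]

theorem forall_affine_eq_eval_iff {ι κ : Type*} [Fintype ι] [DecidableEq ι] [DecidableEq κ]
    (s : ι → Finset κ) (A : ℝ) (B : ι → κ → ℝ) {i₀ : ι} {j₀ : κ} (hj₀ : j₀ ∈ s i₀) :
    (∀ (α : ℝ) (θ : ι → κ → ℝ), α * A + ∑ k, ∑ j ∈ s k, θ k j * B k j = θ i₀ j₀)
      ↔ A = 0 ∧ ∀ k, ∀ j ∈ s k, B k j = if k = i₀ ∧ j = j₀ then 1 else 0 := by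
  constructor
  · intro h
    refine ⟨by simpa using h 1 0, fun k j hj => ?_⟩
    have hkj := h 0 fun k' j' => if k' = k ∧ j' = j then 1 else 0
    simp only [zero_mul, zero_add, ite_mul, one_mul, sum_sum_ite_and_eq, if_pos hj] at hkj
    simpa only [eq_comm] using hkj
  · rintro ⟨hA, hB⟩ α θ
    rw [hA, mul_zero, zero_add]
    have hsum : ∀ k, ∑ j ∈ s k, θ k j * B k j
        = ∑ j ∈ s k, if k = i₀ ∧ j = j₀ then θ k j else 0 :=
      fun k => sum_congr rfl fun j hj => by rw [hB k j hj, mul_ite, mul_one, mul_zero]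
    simp only [hsum, sum_sum_ite_and_eq, if_pos hj₀]

theorem forall_mem_Icc_eq_ite_iff {K : ℕ} {m : Fin (K + 1) → ℕ} (hm : 1 ≤ m 0)
    (B : Fin (K + 1) → ℕ → ℝ) :
    (∀ k, ∀ j ∈ Icc 1 (m k), B k j = if k = 0 ∧ j = m 0 then 1 else 0)
      ↔ B 0 (m 0) = 1 ∧ (∀ j ∈ Icc 1 (m 0 - 1), B 0 j = 0) ∧
        (∀ k, k ≠ 0 → ∀ j ∈ Icc 1 (m k), B k j = 0) := by
  constructor
  · intro h
    refine ⟨by simpa using h 0 (m 0) (mem_Icc.mpr ⟨hm, le_rfl⟩), fun j hj => ?_,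
      fun k hk j hj => by simpa [hk] using h k j hj⟩
    rw [mem_Icc] at hj
    rw [h 0 j (mem_Icc.mpr ⟨hj.1, by omega⟩), if_neg (by omega)]
  · rintro ⟨htop, hlow, hother⟩ k j hj
    rcases eq_or_ne k 0 with rfl | hk
    · rcases eq_or_ne j (m 0) with rfl | hj'
      · simp [htop]
      · rw [mem_Icc] at hj
        rw [hlow j (mem_Icc.mpr ⟨hj.1, by omega⟩), if_neg (by omega)]
    · rw [hother k hk j hj, if_neg (by tauto)]

theorem stmt3_general (K : ℕ) (m : Fin (K + 1) → ℕ) (hm : 1 ≤ m 0)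
    (p : ((k : Fin (K + 1)) → Fin (m k + 1)) → ℝ)
    (w : ((k : Fin (K + 1)) → Fin (m k + 1)) → ℝ) :
    (∀ (α : ℝ) (θ : Fin (K + 1) → ℕ → ℝ),
        ∑ e, p e * w e *
            (α + ∑ k : Fin (K + 1), ∑ j ∈ Finset.Icc 1 (m k),
                θ k j * (if (e k : ℕ) = j then 1 else 0))
          = θ 0 (m 0))
    ↔ ((∑ e, p e * w e = 0) ∧
       (∑ e, p e * w e * (if (e 0 : ℕ) = m 0 then 1 else 0) = 1) ∧
       (∀ j ∈ Finset.Icc 1 (m 0 - 1),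
          ∑ e, p e * w e * (if (e 0 : ℕ) = j then 1 else 0) = 0) ∧
       (∀ k : Fin (K + 1), k ≠ 0 → ∀ j ∈ Finset.Icc 1 (m k),
          ∑ e, p e * w e * (if (e k : ℕ) = j then 1 else 0) = 0)) := by
  simp only [sum_mul_affine_eq]
  exact (forall_affine_eq_eval_iff (fun k => Icc 1 (m k)) _ _ (mem_Icc.mpr ⟨hm, le_rfl⟩)).trans
    (and_congr_right' (forall_mem_Icc_eq_ite_iff hm _))

/-- A linear estimator `w(E_obs) Y(E_obs)` is unbiased for `θ_{1,m₁}` for ALL additive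
potential outcome functions `Y(e) = α + Σ_{k,j} θ_{k,j} 1{e_k = j}` if and only if the
four families of linear constraints on `w` hold. The exposure set is
`{0,…,m₀} × ⋯ × {0,…,m_K}` (first component is index `0`). -/
theorem stmt3 (K : ℕ) (m : Fin (K + 1) → ℕ) (hm : 1 ≤ m 0)
    (p : ((k : Fin (K + 1)) → Fin (m k + 1)) → ℝ)
    (hp : ∀ e, 0 < p e) (hp1 : ∑ e, p e = 1)
    (w : ((k : Fin (K + 1)) → Fin (m k + 1)) → ℝ) :
    (∀ (α : ℝ) (θ : Fin (K + 1) → ℕ → ℝ),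
        ∑ e, p e * w e *
            (α + ∑ k : Fin (K + 1), ∑ j ∈ Finset.Icc 1 (m k),
                θ k j * (if (e k : ℕ) = j then 1 else 0))
          = θ 0 (m 0))
    ↔ ((∑ e, p e * w e = 0) ∧
       (∑ e, p e * w e * (if (e 0 : ℕ) = m 0 then 1 else 0) = 1) ∧
       (∀ j ∈ Finset.Icc 1 (m 0 - 1),
          ∑ e, p e * w e * (if (e 0 : ℕ) = j then 1 else 0) = 0) ∧
       (∀ k : Fin (K + 1), k ≠ 0 → ∀ j ∈ Finset.Icc 1 (m k),
          ∑ e, p e * w e * (if (e k : ℕ) = j then 1 else 0) = 0)) :=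
  stmt3_general K m hm p w
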